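/- arXiv:2603.04504 — 2 statements merged into one kernel-verified Lean document; each statement's English description precedes it below -/
import Mathlib

section
/- For every natural number m, ∑_{(q_1,…,q_{m+1}) ∈ W_{m+1}^{m}} ∏_{l=1}^{m+1} C₀(l−1−∑_{i=1}^{l−1} q_i, q_l) = m!. -/
/-!
Give every top argument of `C₀` an extra slack `c`. Splitting off the first part `q₁ = a` of a
composition contributes `C(c, a)` and leaves the remaining parts with slack `c + 1 - a`. The
polynomials `(1 + kX)^c ∏_{j<k} (1 + jX)` obey the same recursion, because expanding
`(1 + (k+1)X)^c = (X + (1 + kX))^c` binomially yields `∑ₐ C(c, a) Xᵃ (1 + kX)^(c-a)`. Hence the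
weighted count of compositions of `n` into `k` parts is the coefficient of `Xⁿ` in that
polynomial; for `k = m + 1`, `c = 0`, `n = m` this is the top coefficient of
`∏_{j ≤ m} (1 + jX)`, namely `m!`.
-/

/-- `C₀(a,b)`: binomial coefficient `a choose b` for an integer `a` and natural `b`,
with the convention that it vanishes whenever `a < 0` (and also when `b > a`). -/
def C0 (a : ℤ) (b : ℕ) : ℕ := if 0 ≤ a then a.toNat.choose b else 0

open Finset Polynomial

lemma C0_natCast (a b : ℕ) : C0 a b = a.choose b := by
  simp [C0]

lemma Finset.Nat.sum_antidiagonalTuple_succ {M : Type*} [AddCommMonoid M] (k n : ℕ)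
    (f : (Fin (k + 1) → ℕ) → M) :
    ∑ q ∈ Nat.antidiagonalTuple (k + 1) n, f q
      = ∑ ab ∈ antidiagonal n, ∑ p ∈ Nat.antidiagonalTuple k ab.2, f (Fin.cons ab.1 p) := by
  rw [sum_sigma']
  refine (sum_nbij' (fun x ↦ Fin.cons x.1.1 x.2)
    (fun q : Fin (k + 1) → ℕ ↦ ⟨(q 0, ∑ i : Fin k, q i.succ), Fin.tail q⟩) ?_ ?_ ?_ ?_ ?_).symm
  · rintro ⟨⟨a, b⟩, p⟩ h
    simp only [mem_sigma, HasAntidiagonal.mem_antidiagonal, Nat.mem_antidiagonalTuple] at h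
    rw [Nat.mem_antidiagonalTuple, Fin.sum_cons, h.2, h.1]
  · intro q hq
    rw [Nat.mem_antidiagonalTuple, Fin.sum_univ_succ] at hq
    simp only [mem_sigma, HasAntidiagonal.mem_antidiagonal, Nat.mem_antidiagonalTuple]
    exact ⟨hq, rfl⟩
  · rintro ⟨⟨a, b⟩, p⟩ h
    simp only [mem_sigma, HasAntidiagonal.mem_antidiagonal, Nat.mem_antidiagonalTuple] at h
    simp [h.2]
  · intro q _
    exact Fin.cons_self_tail q
  · intro _ _
    rfl

lemma Fin.sum_Iio_succ {M : Type*} [AddCommMonoid M] {k : ℕ} (f : Fin (k + 1) → M) (l : Fin k) :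
    ∑ i ∈ Iio l.succ, f i = f 0 + ∑ i ∈ Iio l, f i.succ := by
  have h : Iio l.succ = insert 0 ((Iio l).map (Fin.succEmb k)) := by
    rw [Fin.map_succEmb_Iio, Ioo_insert_left (Fin.succ_pos l)]
    rfl
  rw [h, sum_insert (by simp), sum_map]
  rfl

def binomWeight (c : ℕ) {k : ℕ} (q : Fin k → ℕ) : ℕ :=
  ∏ l : Fin k, C0 ((l : ℤ) + c - ∑ i ∈ Iio l, (q i : ℤ)) (q l)

lemma binomWeight_cons (c a : ℕ) {k : ℕ} (p : Fin k → ℕ) :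
    binomWeight c (Fin.cons a p : Fin (k + 1) → ℕ) = c.choose a * binomWeight (c + 1 - a) p := by
  rw [binomWeight, Fin.prod_univ_succ]
  have hIio : Iio (0 : Fin (k + 1)) = ∅ := by simp [← bot_eq_zero]
  simp only [hIio, sum_empty, Fin.val_zero, Nat.cast_zero, zero_add, sub_zero, C0_natCast,
    Fin.cons_zero, Fin.cons_succ, Fin.sum_Iio_succ]
  rcases le_or_gt a c with hac | hca
  · congr 1
    refine prod_congr rfl fun l _ ↦ congrArg₂ C0 ?_ rfl
    push_cast [Fin.val_succ, Nat.cast_sub (Nat.le_succ_of_le hac)]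
    ring
  · -- the truncated slack `c + 1 - a` is junk here, but `c.choose a = 0` kills both sides
    simp [Nat.choose_eq_zero_of_lt hca]

noncomputable def weightPoly (k c : ℕ) : ℕ[X] :=
  (1 + C k * X) ^ c * ∏ j ∈ range k, (1 + C j * X)

lemma weightPoly_succ (k c : ℕ) :
    weightPoly (k + 1) c
      = ∑ a ∈ range (c + 1), X ^ a * (C (c.choose a) * weightPoly k (c + 1 - a)) := by
  have split : (1 + C (k + 1) * X : ℕ[X]) = X + (1 + C k * X) := by
    rw [C_add, C_1]
    ring
  rw [weightPoly, prod_range_succ, split, add_pow, sum_mul]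
  refine sum_congr rfl fun a ha ↦ ?_
  rw [weightPoly, Nat.sub_add_comm (mem_range_succ_iff.mp ha), pow_succ, ← map_natCast C,
    Nat.cast_id]
  ring

lemma coeff_weightPoly_succ (k c n : ℕ) :
    (weightPoly (k + 1) c).coeff n
      = ∑ ab ∈ antidiagonal n, c.choose ab.1 * (weightPoly k (c + 1 - ab.1)).coeff ab.2 := by
  rw [weightPoly_succ, finsetSum_coeff, Nat.sum_antidiagonal_eq_sum_range_succ_mk]
  simp only [coeff_X_pow_mul', coeff_C_mul]
  rw [← sum_filter]
  symm
  rw [← sum_filter_of_ne (p := (· ≤ c))]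
  · congr 1
    ext a
    simp only [mem_filter, mem_range]
    omega
  · exact fun a _ ha ↦ not_lt.mp fun hca ↦ ha (by rw [Nat.choose_eq_zero_of_lt hca, zero_mul])

lemma sum_binomWeight_antidiagonalTuple (k c n : ℕ) :
    ∑ q ∈ Nat.antidiagonalTuple k n, binomWeight c q = (weightPoly k c).coeff n := by
  induction k generalizing c n with
  | zero => cases n <;> simp [binomWeight, weightPoly, coeff_one]
  | succ k ih =>
    simp only [Nat.sum_antidiagonalTuple_succ, binomWeight_cons, ← mul_sum, ih,
      coeff_weightPoly_succ]

lemma coeff_card_prod_one_add_C_mul_X {R ι : Type*} [CommSemiring R] (s : Finset ι) (a : ι → R) :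
    (∏ i ∈ s, (1 + C (a i) * X)).coeff #s = ∏ i ∈ s, a i := by
  rw [← mul_one #s, coeff_prod_of_natDegree_le s _ 1 fun i _ ↦ by compute_degree]
  simp [coeff_one]

lemma coeff_weightPoly_zero_eq_factorial (m : ℕ) :
    (weightPoly (m + 1) 0).coeff m = m.factorial := by
  rw [weightPoly, pow_zero, one_mul, prod_range_succ', map_zero, zero_mul, add_zero, mul_one]
  simpa [prod_range_add_one_eq_factorial] using
    coeff_card_prod_one_add_C_mul_X (range m) (fun j ↦ j + 1)

/-- For every natural `m`, summing over weak compositions of `m`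
into `m+1` parts: `∑_{(q₁,…,q_{m+1}) ∈ W_{m+1}^m} ∏_{l=1}^{m+1} C₀(l-1-∑_{i<l} qᵢ, q_l) = m!`. -/
theorem sum_weak_comp_binomial_eq_factorial (m : ℕ) :
    ∑ q ∈ Finset.Nat.antidiagonalTuple (m + 1) m,
      ∏ l : Fin (m + 1), C0 ((l : ℤ) - ∑ i ∈ Finset.Iio l, (q i : ℤ)) (q l)
      = m.factorial := by
  have h := sum_binomWeight_antidiagonalTuple (m + 1) 0 m
  rw [coeff_weightPoly_zero_eq_factorial] at h
  simpa [binomWeight] using h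
end

section
/- Let n and j be natural numbers, let Γ, τ₀ be nonnegative reals, and let μ : ℕ → ℝ be a sequence of nonnegative reals with μ_0 = 1 and μ_i ≤ i!·τ₀^i for all integers 1 ≤ i ≤ j+n−1. Then M_n[j] ≤ Γ·τ₀^j · ∑_{k=0}^{n−1} (j+k)!·(Γτ₀)^k·C(j+2k, j+k), where C(·,·) is the usual binomial coefficient. -/
/-!
A composition `q` of `j + k - 1` into `k` parts contributes
`Γ^k ∏ μ_{q_i} ≤ Γ^k ∏ q_i! τ₀^{q_i} ≤ Γ^k (j+k-1)! τ₀^{j+k-1}`, the last step because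
multinomial coefficients are integers. By stars and bars there are
`C(j+2k-2, j+k-1)` such compositions; shifting `k` by one gives the stated sum.
-/

/-- `M_n[j] := ∑_{k=1}^{n} ∑_{(q₁,…,q_k) ∈ W_k^{j+k-1}} ∏_{i=1}^{k} (Γ μ_{qᵢ})`,
summing over weak compositions of `j+k-1` into `k` parts (so `M_0[j] = 0`). -/
noncomputable def Mker (Γ : ℝ) (μ : ℕ → ℝ) (n j : ℕ) : ℝ :=
  ∑ k ∈ Finset.Icc 1 n, ∑ q ∈ Finset.Nat.antidiagonalTuple k (j + k - 1),
    ∏ i : Fin k, (Γ * μ (q i))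

open Finset Nat

theorem Finset.Nat.card_antidiagonalTuple (k n : ℕ) :
    #(Nat.antidiagonalTuple k n) = (k + n - 1).choose n := by
  rw [← piAntidiag_univ_fin_eq_antidiagonalTuple, ← map_sym_eq_piAntidiag, card_map,
    sym_univ, card_univ, Sym.card_sym_eq_choose, Fintype.card_fin]

theorem prod_factorial_mul_pow_le_factorial_sum_mul_pow {ι : Type*} (s : Finset ι) (q : ι → ℕ)
    {τ : ℝ} (hτ : 0 ≤ τ) :
    ∏ i ∈ s, ((q i)! * τ ^ q i : ℝ) ≤ (∑ i ∈ s, q i)! * τ ^ ∑ i ∈ s, q i := by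
  rw [prod_mul_distrib, prod_pow_eq_pow_sum]
  gcongr
  exact_mod_cast Nat.le_of_dvd (factorial_pos _) (prod_factorial_dvd_factorial_sum s q)

theorem prod_le_factorial_sum_mul_pow {ι : Type*} (s : Finset ι) (q : ι → ℕ) {τ : ℝ} (hτ : 0 ≤ τ)
    {μ : ℕ → ℝ} (hμnonneg : ∀ i, 0 ≤ μ i) (hμ : ∀ i ≤ ∑ i ∈ s, q i, μ i ≤ i ! * τ ^ i) :
    ∏ i ∈ s, μ (q i) ≤ (∑ i ∈ s, q i)! * τ ^ ∑ i ∈ s, q i :=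
  (prod_le_prod (fun _ _ ↦ hμnonneg _)
    fun _ hi ↦ hμ _ (single_le_sum (fun _ _ ↦ Nat.zero_le _) hi)).trans
    (prod_factorial_mul_pow_le_factorial_sum_mul_pow s q hτ)

theorem sum_antidiagonalTuple_prod_le (k m : ℕ) {Γ τ : ℝ} (hΓ : 0 ≤ Γ) (hτ : 0 ≤ τ)
    {μ : ℕ → ℝ} (hμnonneg : ∀ i, 0 ≤ μ i) (hμ : ∀ i ≤ m, μ i ≤ i ! * τ ^ i) :
    ∑ q ∈ Finset.Nat.antidiagonalTuple k m, ∏ i, Γ * μ (q i)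
      ≤ (k + m - 1).choose m * (Γ ^ k * (m ! * τ ^ m)) := by
  rw [← Finset.Nat.card_antidiagonalTuple, ← nsmul_eq_mul]
  refine sum_le_card_nsmul _ _ _ fun q hq ↦ ?_
  have hsum : ∑ i, q i = m := Finset.Nat.mem_antidiagonalTuple.mp hq
  rw [prod_mul_distrib, prod_const, Finset.card_univ, Fintype.card_fin, ← hsum]
  gcongr
  exact prod_le_factorial_sum_mul_pow _ q hτ hμnonneg (hsum ▸ hμ)

/-- If `Γ, τ₀ ≥ 0`, `μ` is nonnegative with `μ 0 = 1` and
`μ i ≤ i! τ₀^i` for `1 ≤ i ≤ j+n-1`, then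
`M_n[j] ≤ Γ τ₀^j ∑_{k=0}^{n-1} (j+k)! (Γτ₀)^k C(j+2k, j+k)`. -/
theorem Mker_le (n j : ℕ) (Γ τ₀ : ℝ) (hΓ : 0 ≤ Γ) (hτ : 0 ≤ τ₀)
    (μ : ℕ → ℝ) (hμ0 : μ 0 = 1) (hμnonneg : ∀ i, 0 ≤ μ i)
    (hμ : ∀ i, 1 ≤ i → i ≤ j + n - 1 → μ i ≤ i.factorial * τ₀ ^ i) :
    Mker Γ μ n j ≤ Γ * τ₀ ^ j *
      ∑ k ∈ Finset.range n,
        (j + k).factorial * (Γ * τ₀) ^ k * ((j + 2 * k).choose (j + k)) := by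
  have hμ_le (i : ℕ) (hi : i ≤ j + n - 1) : μ i ≤ i ! * τ₀ ^ i := by
    rcases i.eq_zero_or_pos with rfl | hi0
    · simp [hμ0]
    · exact hμ i hi0 hi
  rw [Mker, ← Finset.Ico_add_one_right_eq_Icc, sum_Ico_eq_sum_range, Nat.add_sub_cancel,
    mul_sum]
  refine sum_le_sum fun k hk ↦ ?_
  have hkn : k < n := mem_range.mp hk
  calc _ ≤ ((1 + k + (j + k) - 1).choose (j + k) : ℕ)
          * (Γ ^ (1 + k) * ((j + k)! * τ₀ ^ (j + k))) := by
        rw [show j + (1 + k) - 1 = j + k by omega]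
        exact sum_antidiagonalTuple_prod_le _ _ hΓ hτ hμnonneg fun i hi ↦ hμ_le i (by omega)
    _ = _ := by
        rw [show 1 + k + (j + k) - 1 = j + 2 * k by omega]
        ring
end
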